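/- Let u₁, u₂ : ℝⁿ → ℝ ∪ {+∞} be lower semicontinuous convex functions, not identically +∞, with bounded effective domains. Then u₁*(y) − u₂*(y) → 0 as |y| → +∞ if and only if: (i) dom(u₁) = dom(u₂); (ii) u₁ = u₂ on the boundary of dom(u₁); and (iii) if U := int dom(u₁) is nonempty, then u₁(x) − u₂(x) → 0 as x ∈ U tends to ∂U. -/

import Mathlib

/-!
Write `u* y = sup_{x ∈ dom u} (⟪x, y⟫ - u x)`; it is real-valued since `dom u` is bounded and `u`
is bounded below.

If `u₁* - u₂* → 0` and `x ∉ int dom u₂`, a supporting direction `θ` of `dom u₂` at `x` makes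
`⟪x, y⟫ - u₂*(y)` non-decreasing along rays `y₀ + tθ`. By Fenchel–Moreau these values come
arbitrarily close to `u₂ x`, and far out `u₁* ≈ u₂*`, so `u₂ x ≤ u₁ x`; this gives (i) and (ii).
For (iii), at `x` near a boundary point `x₀` a near-optimal `y` in
`u₁ x = sup_y (⟪x, y⟫ - u₁*(y))` is either far out, where again `u₁* ≈ u₂*`, or in a fixed ball,
where `⟪x, y⟫ - u₁*(y)` is close to its value at `x₀`, which is at most
`u₁ x₀ = u₂ x₀ ≤ u₂ x + o(1)` by lower semicontinuity.

Conversely, for large `|y|` the near-maximisers of `⟪x, y⟫ - u x` avoid every compact subset `K`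
of `int dom u`: the point `x + δ y / |y|` beats `x ∈ K` by `δ |y|` minus a bound for `u` near `K`.
So they lie on `∂ dom u`, where `u₁ = u₂`, or close to `∂ (int dom u)`, where `u₁ ≈ u₂`.
-/

open Set Filter Topology
open scoped RealInnerProductSpace

noncomputable section

abbrev En (n : ℕ) := EuclideanSpace ℝ (Fin n)

/-- The Legendre transform (convex conjugate) `u*(y) = sup_x (⟪x, y⟫ - u x)`. -/
def legendre {n : ℕ} (u : En n → EReal) (y : En n) : EReal :=
  ⨆ x : En n, ((⟪x, y⟫ : ℝ) : EReal) - u x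

open Bornology Metric

def effDom {α : Type*} (u : α → EReal) : Set α := {x | u x ≠ ⊤}

theorem Convex.exists_ne_zero_inner_le_of_notMem_interior {E : Type*} [NormedAddCommGroup E]
    [InnerProductSpace ℝ E] [FiniteDimensional ℝ E] {s : Set E} (hs : Convex ℝ s)
    (hne : s.Nonempty) {x : E} (hx : x ∉ interior s) :
    ∃ θ ≠ 0, ∀ z ∈ s, ⟪z, θ⟫ ≤ ⟪x, θ⟫ := by
  rcases (interior s).eq_empty_or_nonempty with hint | hint
  · obtain ⟨z₀, hz₀⟩ := hne
    have hdir : (affineSpan ℝ s).direction ≠ ⊤ := fun h => by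
      rw [AffineSubspace.direction_eq_top_iff_of_nonempty ⟨z₀, subset_affineSpan ℝ s hz₀⟩,
        ← hs.interior_nonempty_iff_affineSpan_eq_top, hint] at h
      exact not_nonempty_empty h
    obtain ⟨ν, hν, hν0⟩ :=
      Submodule.exists_mem_ne_zero_of_ne_bot (mt Submodule.orthogonal_eq_bot_iff.1 hdir)
    have hconst : ∀ z ∈ s, ⟪z, ν⟫ = ⟪z₀, ν⟫ := fun z hz => by
      have := (Submodule.mem_orthogonal _ _).1 hν _
        (AffineSubspace.vsub_mem_direction (mem_affineSpan ℝ hz) (mem_affineSpan ℝ hz₀))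
      rwa [vsub_eq_sub, inner_sub_left, sub_eq_zero] at this
    rcases le_total ⟪z₀, ν⟫ ⟪x, ν⟫ with h | h
    · exact ⟨ν, hν0, fun z hz => (hconst z hz).trans_le h⟩
    · refine ⟨-ν, neg_ne_zero.2 hν0, fun z hz => ?_⟩
      rw [inner_neg_right, inner_neg_right, hconst z hz]
      exact neg_le_neg h
  · obtain ⟨f, hf0, hf⟩ := geometric_hahn_banach_of_nonempty_interior_point hs hx hint
    refine ⟨(InnerProductSpace.toDual ℝ E).symm f, by simpa using hf0, fun z hz => ?_⟩
    simpa only [real_inner_comm _ z, real_inner_comm _ x, InnerProductSpace.toDual_symm_apply]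
      using hf z hz

section Normed

variable {E : Type*} [NormedAddCommGroup E] [NormedSpace ℝ E]

structure IsProperLscConvexBddDom (u : E → EReal) : Prop where
  lsc : LowerSemicontinuous u
  convex_epigraph : Convex ℝ {p : E × ℝ | u p.1 ≤ p.2}
  ne_bot : ∀ x, u x ≠ ⊥
  nonempty_effDom : (effDom u).Nonempty
  isBounded_effDom : IsBounded (effDom u)

namespace IsProperLscConvexBddDom

variable {u : E → EReal}

theorem coe_toReal (hu : IsProperLscConvexBddDom u) {x : E} (hx : x ∈ effDom u) :
    ((u x).toReal : EReal) = u x :=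
  EReal.coe_toReal hx (hu.ne_bot x)

theorem mem_epigraph (hu : IsProperLscConvexBddDom u) {x : E} (hx : x ∈ effDom u) :
    (x, (u x).toReal) ∈ {p : E × ℝ | u p.1 ≤ p.2} :=
  (hu.coe_toReal hx).ge

theorem isClosed_epigraph (hu : IsProperLscConvexBddDom u) :
    IsClosed {p : E × ℝ | u p.1 ≤ p.2} :=
  hu.lsc.isClosed_epigraph.preimage
    (continuous_fst.prodMk (continuous_coe_real_ereal.comp continuous_snd))

theorem convexOn_toReal (hu : IsProperLscConvexBddDom u) :
    ConvexOn ℝ (effDom u) fun x => (u x).toReal := by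
  have hcomb : ∀ ⦃x⦄, x ∈ effDom u → ∀ ⦃y⦄, y ∈ effDom u → ∀ ⦃a b : ℝ⦄, 0 ≤ a → 0 ≤ b →
      a + b = 1 → u (a • x + b • y) ≤ ((a * (u x).toReal + b * (u y).toReal : ℝ) : EReal) :=
    fun x hx y hy a b ha hb hab =>
      hu.convex_epigraph (hu.mem_epigraph hx) (hu.mem_epigraph hy) ha hb hab
  refine ⟨fun x hx y hy a b ha hb hab =>
    ne_top_of_le_ne_top (EReal.coe_ne_top _) (hcomb hx hy ha hb hab),
    fun x hx y hy a b ha hb hab => ?_⟩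
  simpa only [smul_eq_mul, EReal.toReal_coe] using
    EReal.toReal_le_toReal (hcomb hx hy ha hb hab) (hu.ne_bot _) (EReal.coe_ne_top _)

end IsProperLscConvexBddDom

end Normed

section InnerProduct

variable {E : Type*} [NormedAddCommGroup E] [InnerProductSpace ℝ E]

def realLegendre (u : E → EReal) (y : E) : ℝ :=
  sSup ((fun x => ⟪x, y⟫ - (u x).toReal) '' effDom u)

theorem exists_inner_add_mul_lt_of_notMem [CompleteSpace E] {S : Set (E × ℝ)} (hS : Convex ℝ S)
    (hSc : IsClosed S) {p : E × ℝ} (hp : p ∉ S) :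
    ∃ (θ : E) (c α : ℝ), (∀ q ∈ S, ⟪q.1, θ⟫ + q.2 * c < α) ∧ α < ⟪p.1, θ⟫ + p.2 * c := by
  obtain ⟨F, α, hF, hFp⟩ := geometric_hahn_banach_closed_point hS hSc hp
  set θ := (InnerProductSpace.toDual ℝ E).symm (F.comp (ContinuousLinearMap.inl ℝ E ℝ))
  have hF_apply : ∀ q : E × ℝ, F q = ⟪q.1, θ⟫ + q.2 * F (0, 1) := fun q => by
    rw [real_inner_comm, InnerProductSpace.toDual_symm_apply, ← smul_eq_mul, ← map_smul,
      ContinuousLinearMap.comp_apply, ContinuousLinearMap.inl_apply, ← map_add]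
    simp
  exact ⟨θ, F (0, 1), α, fun q hq => hF_apply q ▸ hF q hq, hF_apply p ▸ hFp⟩

namespace IsProperLscConvexBddDom

variable {u : E → EReal}

theorem exists_inner_le (hu : IsProperLscConvexBddDom u) :
    ∃ R, ∀ x ∈ effDom u, ∀ y, ⟪x, y⟫ ≤ R * ‖y‖ := by
  obtain ⟨R, hR⟩ := hu.isBounded_effDom.subset_closedBall 0
  exact ⟨R, fun x hx y => (real_inner_le_norm x y).trans <|
    mul_le_mul_of_nonneg_right (mem_closedBall_zero_iff.1 (hR hx)) (norm_nonneg y)⟩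

theorem realLegendre_le (hu : IsProperLscConvexBddDom u) {y : E} {b : ℝ}
    (h : ∀ x ∈ effDom u, ⟪x, y⟫ - (u x).toReal ≤ b) : realLegendre u y ≤ b :=
  csSup_le (hu.nonempty_effDom.image _) (forall_mem_image.2 h)

theorem exists_lt_inner_sub (hu : IsProperLscConvexBddDom u) {y : E} {b : ℝ}
    (h : b < realLegendre u y) : ∃ x ∈ effDom u, b < ⟪x, y⟫ - (u x).toReal := by
  obtain ⟨_, ⟨x, hx, rfl⟩, hlt⟩ := exists_lt_of_lt_csSup (hu.nonempty_effDom.image _) h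
  exact ⟨x, hx, hlt⟩

end IsProperLscConvexBddDom

end InnerProduct

namespace IsProperLscConvexBddDom

variable {E : Type*} [NormedAddCommGroup E] [InnerProductSpace ℝ E] [FiniteDimensional ℝ E]
  {u u₁ u₂ : E → EReal}

theorem exists_forall_le (hu : IsProperLscConvexBddDom u) : ∃ m : ℝ, ∀ x, (m : EReal) ≤ u x := by
  obtain ⟨x₁, hx₁⟩ := hu.nonempty_effDom
  obtain ⟨x₀, -, hmin⟩ := LowerSemicontinuousOn.exists_isMinOn ⟨x₁, subset_closure hx₁⟩
    hu.isBounded_effDom.isCompact_closure (hu.lsc.lowerSemicontinuousOn _)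
  refine ⟨(u x₀).toReal, fun x => ?_⟩
  rw [EReal.coe_toReal (ne_top_of_le_ne_top hx₁ (hmin (subset_closure hx₁))) (hu.ne_bot x₀)]
  by_cases hx : x ∈ closure (effDom u)
  · exact hmin hx
  · rw [not_not.1 (mt (@subset_closure _ _ (effDom u) x) hx)]
    exact le_top

theorem bddAbove_image (hu : IsProperLscConvexBddDom u) (y : E) :
    BddAbove ((fun x => ⟪x, y⟫ - (u x).toReal) '' effDom u) := by
  obtain ⟨m, hm⟩ := hu.exists_forall_le
  obtain ⟨R, hR⟩ := hu.exists_inner_le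
  refine ⟨R * ‖y‖ - m, forall_mem_image.2 fun x hx => ?_⟩
  have : m ≤ (u x).toReal := EReal.coe_le_coe_iff.1 ((hm x).trans_eq (hu.coe_toReal hx).symm)
  linarith [hR x hx y]

theorem inner_sub_le_realLegendre (hu : IsProperLscConvexBddDom u) {x : E} (hx : x ∈ effDom u)
    (y : E) : ⟪x, y⟫ - (u x).toReal ≤ realLegendre u y :=
  le_csSup (hu.bddAbove_image y) (mem_image_of_mem _ hx)

theorem inner_sub_realLegendre_le (hu : IsProperLscConvexBddDom u) (x y : E) :
    ((⟪x, y⟫ - realLegendre u y : ℝ) : EReal) ≤ u x := by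
  by_cases hx : x ∈ effDom u
  · rw [← hu.coe_toReal hx, EReal.coe_le_coe_iff]
    linarith [hu.inner_sub_le_realLegendre hx y]
  · rw [not_not.1 hx]
    exact le_top

theorem realLegendre_add_le (hu : IsProperLscConvexBddDom u) {v : E} {β : ℝ}
    (h : ∀ x ∈ effDom u, ⟪x, v⟫ ≤ β) (y : E) :
    realLegendre u (y + v) ≤ realLegendre u y + β :=
  hu.realLegendre_le fun x hx => by
    rw [inner_add_right]
    linarith [hu.inner_sub_le_realLegendre hx y, h x hx]

theorem continuous_realLegendre (hu : IsProperLscConvexBddDom u) : Continuous (realLegendre u) := by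
  obtain ⟨R, hR⟩ := hu.exists_inner_le
  refine (LipschitzWith.of_le_add_mul' R fun y₁ y₂ => ?_).continuous
  simpa only [add_sub_cancel, dist_eq_norm] using
    hu.realLegendre_add_le (fun x hx => hR x hx (y₁ - y₂)) y₂

theorem exists_lt_inner_sub_realLegendre (hu : IsProperLscConvexBddDom u) {x : E} {r : ℝ}
    (hr : (r : EReal) < u x) : ∃ y, r < ⟪x, y⟫ - realLegendre u y := by
  obtain ⟨θ, c, α, hF, hFx⟩ := exists_inner_add_mul_lt_of_notMem hu.convex_epigraph
    hu.isClosed_epigraph (p := (x, r)) (not_le.2 hr)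
  have hF_dom : ∀ z ∈ effDom u, ⟪z, θ⟫ + (u z).toReal * c < α := fun z hz =>
    hF _ (hu.mem_epigraph hz)
  have hc : c ≤ 0 := by
    by_contra! hc
    obtain ⟨z, hz⟩ := hu.nonempty_effDom
    set t := max (u z).toReal ((α - ⟪z, θ⟫) / c)
    have hzt : (z, t) ∈ {p : E × ℝ | u p.1 ≤ p.2} :=
      (hu.mem_epigraph hz).out.trans (EReal.coe_le_coe_iff.2 (le_max_left _ _))
    have h1 := hF _ hzt
    have h2 := mul_le_mul_of_nonneg_right (le_max_right (u z).toReal ((α - ⟪z, θ⟫) / c)) hc.le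
    rw [div_mul_cancel₀ _ hc.ne'] at h2
    linarith
  rcases hc.lt_or_eq with hc | hc
  · -- the separating hyperplane is the graph of an affine minorant of `u` passing above `(x, r)`
    refine ⟨(-c)⁻¹ • θ, ?_⟩
    have hle : realLegendre u ((-c)⁻¹ • θ) ≤ (-c)⁻¹ * α := hu.realLegendre_le fun z hz => by
      calc ⟪z, (-c)⁻¹ • θ⟫ - (u z).toReal = (-c)⁻¹ * (⟪z, θ⟫ + (u z).toReal * c) := by
            rw [real_inner_smul_right]
            linear_combination (-(u z).toReal) * (by field_simp [hc.ne] : (-c)⁻¹ * c = -1)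
        _ ≤ (-c)⁻¹ * α := mul_le_mul_of_nonneg_left (hF_dom z hz).le (by simp [hc.le])
    have hlt : r < (-c)⁻¹ * (⟪x, θ⟫ - α) := by
      rw [lt_inv_mul_iff₀ (neg_pos.2 hc)]
      linarith
    rw [real_inner_smul_right]
    linarith
  · -- the separating hyperplane is vertical: push `y` far out in the direction `θ`
    have hθ : ∀ z ∈ effDom u, ⟪z, θ⟫ ≤ α := fun z hz => by simpa [hc] using (hF_dom z hz).le
    rw [hc, mul_zero, add_zero] at hFx
    obtain ⟨t, ht, ht0⟩ := (((tendsto_id.atTop_mul_const (sub_pos.2 hFx)).eventually_gt_atTop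
      (r + realLegendre u 0)).and (eventually_ge_atTop 0)).exists
    have hshift := hu.realLegendre_add_le (v := t • θ) (β := t * α)
      (fun z hz => by rw [real_inner_smul_right]; exact mul_le_mul_of_nonneg_left (hθ z hz) ht0) 0
    rw [zero_add] at hshift
    refine ⟨t • θ, ?_⟩
    rw [real_inner_smul_right]
    simp only [id] at ht
    linarith

theorem eventually_inner_sub_add_lt_realLegendre (hu : IsProperLscConvexBddDom u) {K : Set E}
    (hK : IsCompact K) (hKU : K ⊆ interior (effDom u)) {ε : ℝ} (hε : 0 < ε) :
    ∀ᶠ y in cocompact E, ∀ x ∈ K, ⟪x, y⟫ - (u x).toReal + ε < realLegendre u y := by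
  obtain ⟨δ, hδ, hδU⟩ := hK.exists_cthickening_subset_open isOpen_interior hKU
  obtain ⟨C, hC⟩ := (hK.cthickening (r := δ)).exists_bound_of_continuousOn
    (hu.convexOn_toReal.continuousOn_interior.mono hδU)
  rw [← cobounded_eq_cocompact]
  filter_upwards [eventually_cobounded_le_norm ((2 * C + ε) / δ + 1)] with y hy x hx
  have hC0 : 0 ≤ C := (norm_nonneg _).trans (hC x (self_subset_cthickening K hx))
  have hy0 : 0 < ‖y‖ := by
    have := div_nonneg (by linarith : 0 ≤ 2 * C + ε) hδ.le
    linarith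
  -- compare `x` with `x + δ y / ‖y‖`, which gains `δ ‖y‖` in `⟪·, y⟫`
  set w := x + (δ / ‖y‖) • y
  have hw : w ∈ cthickening δ K := mem_cthickening_of_dist_le w x δ K hx <| by
    rw [dist_self_add_left, norm_smul, Real.norm_of_nonneg (by positivity),
      div_mul_cancel₀ _ hy0.ne']
  have hwy : ⟪w, y⟫ = ⟪x, y⟫ + δ * ‖y‖ := by
    rw [inner_add_left, real_inner_smul_left, real_inner_self_eq_norm_sq]
    field_simp
  have h1 := hu.inner_sub_le_realLegendre (interior_subset (hδU hw)) y
  have h2 := (abs_le.1 (hC w hw)).2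
  have h3 := (abs_le.1 (hC x (self_subset_cthickening K hx))).1
  have h4 : 2 * C + ε < δ * ‖y‖ := by
    rw [← div_lt_iff₀' hδ]
    linarith
  linarith

theorem le_of_notMem_interior (hu₁ : IsProperLscConvexBddDom u₁)
    (hu₂ : IsProperLscConvexBddDom u₂)
    (hT : Tendsto (fun y => realLegendre u₁ y - realLegendre u₂ y) (cocompact E) (𝓝 0))
    {x : E} (hx : x ∉ interior (effDom u₂)) : u₂ x ≤ u₁ x := by
  refine EReal.ge_of_forall_gt_iff_ge.1 fun r hr => ?_
  obtain ⟨y₀, hy₀⟩ := hu₂.exists_lt_inner_sub_realLegendre hr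
  obtain ⟨θ, hθ0, hθ⟩ :=
    hu₂.convexOn_toReal.1.exists_ne_zero_inner_le_of_notMem_interior hu₂.nonempty_effDom hx
  have hray : Tendsto (fun t : ℝ => y₀ + t • θ) atTop (cocompact E) :=
    tendsto_cocompact_of_tendsto_dist_comp_atTop y₀ <| by
      simpa only [dist_self_add_left, norm_smul, Real.norm_eq_abs] using
        tendsto_abs_atTop_atTop.atTop_mul_const (norm_pos_iff.2 hθ0)
  obtain ⟨t, ht, ht0⟩ := (((hT.comp hray).eventually (eventually_lt_nhds (sub_pos.2 hy₀))).and
    (eventually_ge_atTop 0)).exists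
  have hshift := hu₂.realLegendre_add_le (v := t • θ) (β := t * ⟪x, θ⟫)
    (fun z hz => by rw [real_inner_smul_right]; exact mul_le_mul_of_nonneg_left (hθ z hz) ht0) y₀
  refine le_trans (EReal.coe_le_coe_iff.2 ?_) (hu₁.inner_sub_realLegendre_le x (y₀ + t • θ))
  simp only [Function.comp_apply] at ht
  rw [inner_add_right, real_inner_smul_right]
  linarith

theorem effDom_subset_of_tendsto (hu₁ : IsProperLscConvexBddDom u₁)
    (hu₂ : IsProperLscConvexBddDom u₂)
    (hT : Tendsto (fun y => realLegendre u₁ y - realLegendre u₂ y) (cocompact E) (𝓝 0)) :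
    effDom u₁ ⊆ effDom u₂ := fun x hx => by
  by_cases hx₂ : x ∈ interior (effDom u₂)
  · exact interior_subset hx₂
  · exact ne_top_of_le_ne_top hx (hu₁.le_of_notMem_interior hu₂ hT hx₂)

theorem eventually_toReal_sub_lt (hu₁ : IsProperLscConvexBddDom u₁)
    (hu₂ : IsProperLscConvexBddDom u₂)
    (hT : Tendsto (fun y => realLegendre u₁ y - realLegendre u₂ y) (cocompact E) (𝓝 0))
    {x₀ : E} (hx₀ : u₁ x₀ ≤ u₂ x₀) {ε : ℝ} (hε : 0 < ε) :
    ∀ᶠ x in 𝓝 x₀, x ∈ effDom u₁ → x ∈ effDom u₂ → (u₁ x).toReal - (u₂ x).toReal < ε := by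
  obtain ⟨T, -, hfar⟩ := (hasBasis_cobounded_compl_closedBall (0 : E)).eventually_iff.1 <|
    (cobounded_eq_cocompact (α := E)).symm ▸
      hT.eventually (eventually_gt_nhds (neg_lt_zero.2 (half_pos hε)))
  set R := max T 1
  have hR : 0 < R := one_pos.trans_le (le_max_right T 1)
  obtain ⟨y₀, -, hy₀⟩ := (isCompact_closedBall (0 : E) R).exists_isMaxOn
    ⟨0, mem_closedBall_self (by positivity)⟩
    ((continuous_const.inner continuous_id).sub hu₁.continuous_realLegendre).continuousOn
  set S := ⟪x₀, y₀⟫ - realLegendre u₁ y₀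
  have hS : ((S - ε / 4 : ℝ) : EReal) < u₂ x₀ :=
    (EReal.coe_lt_coe_iff.2 (by linarith)).trans_le
      ((hu₁.inner_sub_realLegendre_le x₀ y₀).trans hx₀)
  filter_upwards [hu₂.lsc x₀ _ hS, ball_mem_nhds x₀ (by positivity : 0 < ε / (4 * R))]
    with x hlsc hball hx₁ hx₂
  by_contra! hge
  obtain ⟨y, hy⟩ := hu₁.exists_lt_inner_sub_realLegendre
    ((EReal.coe_lt_coe_iff.2 (sub_lt_self _ (half_pos hε))).trans_eq (hu₁.coe_toReal hx₁))
  have h₂ := hu₂.inner_sub_le_realLegendre hx₂ y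
  by_cases hyR : ‖y‖ ≤ R
  · have hmax : ⟪x₀, y⟫ - realLegendre u₁ y ≤ S := hy₀ (mem_closedBall_zero_iff.2 hyR)
    have hclose : ⟪x, y⟫ - ⟪x₀, y⟫ < ε / 4 := by
      rw [← inner_sub_left]
      calc ⟪x - x₀, y⟫ ≤ ‖x - x₀‖ * ‖y‖ := real_inner_le_norm _ _
        _ ≤ ‖x - x₀‖ * R := mul_le_mul_of_nonneg_left hyR (norm_nonneg _)
        _ < ε / (4 * R) * R := by
            rw [← dist_eq_norm]
            exact mul_lt_mul_of_pos_right (mem_ball.1 hball) (by positivity)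
        _ = ε / 4 := by field_simp
    have hb : S - ε / 4 < (u₂ x).toReal :=
      EReal.coe_lt_coe_iff.1 (hlsc.trans_eq (hu₂.coe_toReal hx₂).symm)
    linarith
  · have := hfar (mt mem_closedBall_zero_iff.1 fun h => hyR (h.trans (le_max_left T 1)))
    linarith

theorem tendsto_toReal_sub_nhdsSet_frontier (hu₁ : IsProperLscConvexBddDom u₁)
    (hu₂ : IsProperLscConvexBddDom u₂)
    (hT : Tendsto (fun y => realLegendre u₁ y - realLegendre u₂ y) (cocompact E) (𝓝 0))
    (hT' : Tendsto (fun y => realLegendre u₂ y - realLegendre u₁ y) (cocompact E) (𝓝 0))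
    (hD : effDom u₁ = effDom u₂) (heq : ∀ x ∉ interior (effDom u₁), u₁ x = u₂ x) :
    Tendsto (fun x => (u₁ x).toReal - (u₂ x).toReal)
      (𝓝ˢ (frontier (interior (effDom u₁))) ⊓ 𝓟 (interior (effDom u₁))) (𝓝 0) := by
  set U := interior (effDom u₁)
  have hK : IsCompact (frontier U) := isCompact_of_isClosed_isBounded isClosed_frontier <|
    hu₁.isBounded_effDom.closure.subset <|
      frontier_subset_closure.trans (closure_mono interior_subset)
  have hU₁ : U ⊆ effDom u₁ := interior_subset
  have hU₂ : U ⊆ effDom u₂ := hD ▸ interior_subset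
  rw [hK.nhdsSet_inf_eq_biSup]
  simp only [tendsto_iSup]
  intro x₀ hx₀
  have hx₀U : x₀ ∉ U := by
    rw [isOpen_interior.frontier_eq] at hx₀
    exact hx₀.2
  refine tendsto_order.2 ⟨fun a ha => eventually_inf_principal.2 ?_,
    fun a ha => eventually_inf_principal.2 ?_⟩
  · filter_upwards [hu₂.eventually_toReal_sub_lt hu₁ hT' (heq x₀ hx₀U).ge (neg_pos.2 ha)]
      with x hx hxU
    linarith [hx (hU₂ hxU) (hU₁ hxU)]
  · filter_upwards [hu₁.eventually_toReal_sub_lt hu₂ hT (heq x₀ hx₀U).le ha] with x hx hxU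
    exact hx (hU₁ hxU) (hU₂ hxU)

theorem eventually_realLegendre_sub_lt (hu₁ : IsProperLscConvexBddDom u₁)
    (hu₂ : IsProperLscConvexBddDom u₂) (hD : effDom u₁ ⊆ effDom u₂)
    (hfr : ∀ x ∈ frontier (effDom u₁), u₁ x = u₂ x)
    (hint : Tendsto (fun x => (u₁ x).toReal - (u₂ x).toReal)
      (𝓝ˢ (frontier (interior (effDom u₁))) ⊓ 𝓟 (interior (effDom u₁))) (𝓝 0))
    {ε : ℝ} (hε : 0 < ε) :
    ∀ᶠ y in cocompact E, realLegendre u₁ y - realLegendre u₂ y < ε := by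
  set U := interior (effDom u₁)
  obtain ⟨V, hVo, hUV, hV⟩ := mem_nhdsSet_iff_exists.1 <|
    eventually_inf_principal.1
      (hint.eventually (eventually_gt_nhds (neg_lt_zero.2 (half_pos hε))))
  have hK : IsCompact (closure U \ V) :=
    isCompact_of_isClosed_isBounded (isClosed_closure.sdiff hVo) <|
      hu₁.isBounded_effDom.closure.subset (sdiff_subset.trans (closure_mono interior_subset))
  have hKU : closure U \ V ⊆ U := fun x hx =>
    by_contra fun h => hx.2 (hUV ⟨hx.1, fun h' => h (interior_subset h')⟩)
  filter_upwards [hu₁.eventually_inner_sub_add_lt_realLegendre hK hKU (half_pos hε)] with y hy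
  obtain ⟨x, hx, hxy⟩ := hu₁.exists_lt_inner_sub (sub_lt_self (realLegendre u₁ y) (half_pos hε))
  have h₂ := hu₂.inner_sub_le_realLegendre (hD hx) y
  by_cases hxU : x ∈ U
  · by_cases hxV : x ∈ V
    · have := hV hxV hxU
      linarith
    · linarith [hy x ⟨subset_closure hxU, hxV⟩]
  · rw [hfr x ⟨subset_closure hx, hxU⟩] at hxy
    linarith

theorem tendsto_realLegendre_sub_of_eqOn_boundary (hu₁ : IsProperLscConvexBddDom u₁)
    (hu₂ : IsProperLscConvexBddDom u₂) (hD : effDom u₁ = effDom u₂)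
    (hfr : ∀ x ∈ frontier (effDom u₁), u₁ x = u₂ x)
    (hint : Tendsto (fun x => (u₁ x).toReal - (u₂ x).toReal)
      (𝓝ˢ (frontier (interior (effDom u₁))) ⊓ 𝓟 (interior (effDom u₁))) (𝓝 0)) :
    Tendsto (fun y => realLegendre u₁ y - realLegendre u₂ y) (cocompact E) (𝓝 0) := by
  refine tendsto_order.2 ⟨fun a ha => ?_,
    fun a ha => hu₁.eventually_realLegendre_sub_lt hu₂ hD.subset hfr hint ha⟩
  have hint₂ := hint.neg
  rw [neg_zero, hD] at hint₂
  filter_upwards [hu₂.eventually_realLegendre_sub_lt hu₁ hD.symm.subset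
    (fun x hx => (hfr x (hD ▸ hx)).symm) (by simpa using hint₂) (neg_pos.2 ha)] with y hy
  linarith

theorem tendsto_realLegendre_sub_iff (hu₁ : IsProperLscConvexBddDom u₁)
    (hu₂ : IsProperLscConvexBddDom u₂) :
    Tendsto (fun y => realLegendre u₁ y - realLegendre u₂ y) (cocompact E) (𝓝 0) ↔
      (effDom u₁ = effDom u₂ ∧ (∀ x ∈ frontier (effDom u₁), u₁ x = u₂ x) ∧
       ((interior (effDom u₁)).Nonempty →
         Tendsto (fun x => (u₁ x).toReal - (u₂ x).toReal)
           (𝓝ˢ (frontier (interior (effDom u₁))) ⊓ 𝓟 (interior (effDom u₁))) (𝓝 0))) := by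
  refine ⟨fun hT => ?_, fun ⟨hD, hfr, hint⟩ => ?_⟩
  · have hT' : Tendsto (fun y => realLegendre u₂ y - realLegendre u₁ y) (cocompact E) (𝓝 0) := by
      simpa using hT.neg
    have hD := (hu₁.effDom_subset_of_tendsto hu₂ hT).antisymm
      (hu₂.effDom_subset_of_tendsto hu₁ hT')
    have heq : ∀ x ∉ interior (effDom u₁), u₁ x = u₂ x := fun x hx =>
      (hu₂.le_of_notMem_interior hu₁ hT' hx).antisymm
        (hu₁.le_of_notMem_interior hu₂ hT (hD ▸ hx))
    exact ⟨hD, fun x hx => heq x hx.2,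
      fun _ => hu₁.tendsto_toReal_sub_nhdsSet_frontier hu₂ hT hT' hD heq⟩
  · refine hu₁.tendsto_realLegendre_sub_of_eqOn_boundary hu₂ hD hfr ?_
    rcases (interior (effDom u₁)).eq_empty_or_nonempty with h | h
    · simp [h]
    · exact hint h

theorem legendre_eq {n : ℕ} {u : En n → EReal} (hu : IsProperLscConvexBddDom u) (y : En n) :
    legendre u y = realLegendre u y := by
  refine le_antisymm (iSup_le fun x => ?_) (EReal.ge_of_forall_gt_iff_ge.1 fun r hr => ?_)
  · by_cases hx : x ∈ effDom u
    · rw [← hu.coe_toReal hx, ← EReal.coe_sub, EReal.coe_le_coe_iff]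
      exact hu.inner_sub_le_realLegendre hx y
    · rw [not_not.1 hx, EReal.sub_top]
      exact bot_le
  · obtain ⟨x, hx, hlt⟩ := hu.exists_lt_inner_sub (EReal.coe_lt_coe_iff.1 hr)
    calc (r : EReal) ≤ ((⟪x, y⟫ - (u x).toReal : ℝ) : EReal) := EReal.coe_le_coe_iff.2 hlt.le
      _ = ⟪x, y⟫ - u x := by rw [EReal.coe_sub, hu.coe_toReal hx]
      _ ≤ legendre u y := le_iSup (fun x => ((⟪x, y⟫ : ℝ) : EReal) - u x) x

end IsProperLscConvexBddDom

theorem stmt11 {n : ℕ} (u₁ u₂ : En n → EReal)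
    (hlsc₁ : LowerSemicontinuous u₁)
    (hconv₁ : Convex ℝ {p : En n × ℝ | u₁ p.1 ≤ (p.2 : EReal)})
    (hbot₁ : ∀ x, u₁ x ≠ ⊥) (htop₁ : {x | u₁ x ≠ ⊤}.Nonempty)
    (hdb₁ : Bornology.IsBounded {x | u₁ x ≠ ⊤})
    (hlsc₂ : LowerSemicontinuous u₂)
    (hconv₂ : Convex ℝ {p : En n × ℝ | u₂ p.1 ≤ (p.2 : EReal)})
    (hbot₂ : ∀ x, u₂ x ≠ ⊥) (htop₂ : {x | u₂ x ≠ ⊤}.Nonempty)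
    (hdb₂ : Bornology.IsBounded {x | u₂ x ≠ ⊤}) :
    Tendsto (fun y => (legendre u₁ y).toReal - (legendre u₂ y).toReal)
        (cocompact (En n)) (𝓝 0) ↔
      ({x | u₁ x ≠ ⊤} = {x | u₂ x ≠ ⊤} ∧
       (∀ x ∈ frontier {x | u₁ x ≠ ⊤}, u₁ x = u₂ x) ∧
       ((interior {x | u₁ x ≠ ⊤}).Nonempty →
         Tendsto (fun x => (u₁ x).toReal - (u₂ x).toReal)
           (𝓝ˢ (frontier (interior {x | u₁ x ≠ ⊤})) ⊓
             Filter.principal (interior {x | u₁ x ≠ ⊤})) (𝓝 0))) := by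
  have hu₁ : IsProperLscConvexBddDom u₁ := ⟨hlsc₁, hconv₁, hbot₁, htop₁, hdb₁⟩
  have hu₂ : IsProperLscConvexBddDom u₂ := ⟨hlsc₂, hconv₂, hbot₂, htop₂, hdb₂⟩
  simp only [hu₁.legendre_eq, hu₂.legendre_eq, EReal.toReal_coe]
  exact hu₁.tendsto_realLegendre_sub_iff hu₂
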